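/- arXiv:1507.01095 — 2 statements merged into one kernel-verified Lean document; each statement's English description precedes it below -/
import Mathlib

section
/- Let C be a (k,r,h) data-local maximally recoverable code with exactly two local groups (so k = 2r), with local group supports S_1, S_2. Then: (i) for every U ⊆ {1,...,n} with |U| = u ≤ r, ρ(U) = u; (ii) for every U with r+1 ≤ |U| = u ≤ 2r, ρ(U) = u - 1 if S_1 ⊆ U or S_2 ⊆ U, and ρ(U) = u otherwise; (iii) for r+1 ≤ u ≤ 2r, the number of sets U of size u with ρ(U) = u - 1 equals 2·C(n-r-1, u-r-1), and the number of sets U of size u with ρ(U) = u equals C(n,u) - 2·C(n-r-1, u-r-1), where C(a,b) denotes the binomial coefficient. -/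
/-!
The code is systematic, so it has dimension `2r`, and a local parity recovers any single erased
data symbol of its group. If `U` contains no local group, delete from each group one coordinate
outside `U`: what remains is a recovery set `E ⊇ U`, on which `C` has minimum distance `h + 1`.
A codeword vanishing on `2r` coordinates of `E` therefore vanishes on `E`, and then everywhere by
local recovery. So `C` maps isomorphically onto the coordinates of any `2r`-set `T` with
`U ⊆ T ⊆ E`, and `ρ(U) = |U|`. If `S_i ⊆ U`, the parity equation of group `i` gives
`ρ(U) < |U|`, while deleting its parity coordinate leaves a set without local groups, whence
`ρ(U) = |U| - 1`. For `|U| ≤ 2r`, `U` contains at most one group, and (iii) counts the `u`-sets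
containing `S₁` or `S₂`.
-/

open Finset

/-- Coordinates: data symbols `(i, j)` (group `i`, position `j`), then the local parities
(one per group), then the `h` global parities. -/
abbrev DLIdx (ℓ r h : ℕ) : Type := (Fin ℓ × Fin r) ⊕ (Fin ℓ ⊕ Fin h)

/-- The support `S_i` of the `i`-th local group. -/
def dlGroup (ℓ r h : ℕ) (i : Fin ℓ) : Finset (DLIdx ℓ r h) :=
  insert (Sum.inr (Sum.inl i))
    ((Finset.univ : Finset (Fin r)).image fun j => Sum.inl (i, j))

/-- `ρ(U)`: the dimension of the projection of the code `C` onto the coordinates in `U`. -/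
noncomputable def dlRho (ℓ r h : ℕ) (F : Type) [Field F]
    (C : Submodule F (DLIdx ℓ r h → F)) (U : Finset (DLIdx ℓ r h)) : ℕ :=
  Module.finrank F (C.map (LinearMap.funLeft F F (Subtype.val : ↥U → DLIdx ℓ r h)))

lemma natCard_subtype_card_eq_and {α : Type*} [Fintype α] (u : ℕ) (Q : Finset α → Prop)
    [DecidablePred Q] :
    Nat.card {U : Finset α // #U = u ∧ Q U} = #((powersetCard u univ).filter Q) := by
  rw [Nat.card_eq_fintype_card, Fintype.card_subtype, powersetCard_eq_filter, powerset_univ,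
    filter_filter]

lemma card_filter_powersetCard_subset_or_subset {α : Type*} [Fintype α] [DecidableEq α]
    {s t : Finset α} {u : ℕ} (hs : #s ≤ u) (ht : #t ≤ u) (hst : Disjoint s t)
    (hu : u < #s + #t) :
    #((powersetCard u univ).filter fun U => s ⊆ U ∨ t ⊆ U) =
      (Fintype.card α - #s).choose (u - #s) + (Fintype.card α - #t).choose (u - #t) := by
  have hdisj : Disjoint ((powersetCard u univ).filter (s ⊆ ·))
      ((powersetCard u univ).filter (t ⊆ ·)) := by
    refine disjoint_filter.mpr fun U hU hsU htU => ?_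
    have := card_le_card (union_subset hsU htU)
    rw [card_union_of_disjoint hst, (mem_powersetCard.mp hU).2] at this
    omega
  rw [filter_or, card_union_of_disjoint hdisj,
    card_filter_powersetCard_subset s univ u (subset_univ s) hs,
    card_filter_powersetCard_subset t univ u (subset_univ t) ht, card_univ]

section Index

variable {ℓ r h : ℕ}

lemma mem_dlGroup {i : Fin ℓ} {x : DLIdx ℓ r h} :
    x ∈ dlGroup ℓ r h i ↔ x = Sum.inr (Sum.inl i) ∨ ∃ j, x = Sum.inl (i, j) := by
  simp [dlGroup, eq_comm]

lemma card_dlGroup (i : Fin ℓ) : #(dlGroup ℓ r h i) = r + 1 := by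
  rw [dlGroup, card_insert_of_notMem (by simp),
    card_image_of_injective _ fun _ _ hjj' => by simpa using hjj']
  simp

lemma eq_of_mem_dlGroup {i i' : Fin ℓ} {x : DLIdx ℓ r h} (hx : x ∈ dlGroup ℓ r h i)
    (hx' : x ∈ dlGroup ℓ r h i') : i = i' := by
  rw [mem_dlGroup] at hx hx'
  rcases hx with rfl | ⟨j, rfl⟩ <;> rcases hx' with hx' | ⟨j', hx'⟩ <;> simp_all

lemma disjoint_dlGroup {i i' : Fin ℓ} (hne : i ≠ i') :
    Disjoint (dlGroup ℓ r h i) (dlGroup ℓ r h i') :=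
  disjoint_left.mpr fun _ hx hx' => hne (eq_of_mem_dlGroup hx hx')

lemma card_DLIdx : Fintype.card (DLIdx ℓ r h) = ℓ * (r + 1) + h := by
  simp only [Fintype.card_sum, Fintype.card_prod, Fintype.card_fin]
  ring

lemma eq_of_dlGroup_subset {U : Finset (DLIdx ℓ r h)} (hU : #U ≤ 2 * r + 1) {i i' : Fin ℓ}
    (hi : dlGroup ℓ r h i ⊆ U) (hi' : dlGroup ℓ r h i' ⊆ U) : i = i' := by
  by_contra hne
  have := card_le_card (union_subset hi hi')
  rw [card_union_of_disjoint (disjoint_dlGroup hne), card_dlGroup, card_dlGroup] at this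
  omega

lemma exists_superset_card_inter_dlGroup_eq {U : Finset (DLIdx ℓ r h)}
    (hU : ∀ i, ¬ dlGroup ℓ r h i ⊆ U) :
    ∃ E, U ⊆ E ∧ #E = ℓ * r + h ∧ ∀ i, #(E ∩ dlGroup ℓ r h i) = r := by
  choose e he heU using fun i => not_subset.mp (hU i)
  have he_inj : Function.Injective e := fun i i' hii' =>
    eq_of_mem_dlGroup (he i) (hii' ▸ he i')
  refine ⟨univ \ univ.image e, fun x hxU => ?_, ?_, fun i => ?_⟩
  · simp only [mem_sdiff, mem_univ, mem_image, true_and, not_exists]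
    rintro i rfl
    exact heU i hxU
  · rw [card_sdiff_of_subset (subset_univ _), card_univ, card_DLIdx,
      card_image_of_injective _ he_inj, card_univ, Fintype.card_fin, Nat.mul_succ]
    omega
  · have : univ \ univ.image e ∩ dlGroup ℓ r h i = (dlGroup ℓ r h i).erase (e i) := by
      ext x
      simp only [mem_inter, mem_sdiff, mem_univ, mem_image, true_and, not_exists, mem_erase]
      constructor
      · rintro ⟨hx, hxi⟩
        exact ⟨hx i ∘ Eq.symm, hxi⟩
      · rintro ⟨hxe, hxi⟩
        refine ⟨fun i' hi' => ?_, hxi⟩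
        subst hi'
        exact hxe (by rw [eq_of_mem_dlGroup (he i') hxi])
    rw [this, card_erase_of_mem (he i), card_dlGroup, Nat.add_sub_cancel]

lemma card_filter_exists_dlGroup_subset {u : ℕ} (hu₁ : r + 1 ≤ u) (hu₂ : u ≤ 2 * r) :
    #((powersetCard u univ).filter fun U => ∃ i, dlGroup 2 r h i ⊆ U) =
      2 * (2 * r + 2 + h - r - 1).choose (u - r - 1) := by
  simp only [Fin.exists_fin_two]
  rw [card_filter_powersetCard_subset_or_subset (by rw [card_dlGroup]; omega)
    (by rw [card_dlGroup]; omega) (disjoint_dlGroup (by decide))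
    (by rw [card_dlGroup, card_dlGroup]; omega),
    card_dlGroup, card_dlGroup, card_DLIdx, ← two_mul, Nat.sub_sub, Nat.sub_sub, Nat.mul_succ]

end Index

section Rank

variable {ℓ r h : ℕ} {F : Type} [Field F] {C : Submodule F (DLIdx ℓ r h → F)}

lemma map_funLeft_val_of_subset {U T : Finset (DLIdx ℓ r h)} (hUT : U ⊆ T) :
    C.map (LinearMap.funLeft F F (Subtype.val : U → DLIdx ℓ r h)) =
      (C.map (LinearMap.funLeft F F (Subtype.val : T → DLIdx ℓ r h))).map
        (LinearMap.funLeft F F (Set.inclusion hUT)) := by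
  rw [← Submodule.map_comp, ← LinearMap.funLeft_comp]
  rfl

lemma dlRho_mono {U T : Finset (DLIdx ℓ r h)} (hUT : U ⊆ T) :
    dlRho ℓ r h F C U ≤ dlRho ℓ r h F C T := by
  rw [dlRho, dlRho, map_funLeft_val_of_subset hUT]
  exact Submodule.finrank_map_le _ _

lemma dlRho_eq_card_iff {U : Finset (DLIdx ℓ r h)} :
    dlRho ℓ r h F C U = #U ↔
      C.map (LinearMap.funLeft F F (Subtype.val : U → DLIdx ℓ r h)) = ⊤ := by
  rw [dlRho, ← Fintype.card_coe U, ← Module.finrank_fintype_fun_eq_card (R := F)]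
  exact ⟨Submodule.eq_top_of_finrank_eq, fun h => by rw [h, finrank_top]⟩

lemma dlRho_eq_card_of_subset {U T : Finset (DLIdx ℓ r h)} (hUT : U ⊆ T)
    (hT : dlRho ℓ r h F C T = #T) : dlRho ℓ r h F C U = #U := by
  rw [dlRho_eq_card_iff] at hT ⊢
  rw [map_funLeft_val_of_subset hUT, hT, Submodule.map_top, LinearMap.range_eq_top]
  exact LinearMap.funLeft_surjective_of_injective F F _ (Set.inclusion_injective hUT)

end Rank

/-- `E` in `le_hammingNorm` ranges over the recovery sets of the paper. The MRC condition that
`C|_E` be MDS is stated through its minimum distance alone: its dimension is forced by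
`systematic`. -/
structure IsDataLocalMRC (ℓ r h : ℕ) {F : Type} [Field F] [DecidableEq F]
    (C : Submodule F (DLIdx ℓ r h → F)) (a : Fin ℓ → Fin r → F) : Prop where
  systematic : ∀ x : Fin ℓ × Fin r → F, ∃! c : DLIdx ℓ r h → F,
    c ∈ C ∧ ∀ p, c (Sum.inl p) = x p
  coeff_ne_zero : ∀ i j, a i j ≠ 0
  local_parity : ∀ c ∈ C, ∀ i : Fin ℓ,
    c (Sum.inr (Sum.inl i)) = ∑ j : Fin r, a i j * c (Sum.inl (i, j))
  le_hammingNorm : ∀ E : Finset (DLIdx ℓ r h), #E = ℓ * r + h →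
    (∀ i, #(E ∩ dlGroup ℓ r h i) = r) →
    ∀ y ∈ C.map (LinearMap.funLeft F F (Subtype.val : E → DLIdx ℓ r h)),
      y ≠ 0 → h + 1 ≤ hammingNorm y

namespace IsDataLocalMRC

variable {ℓ r h : ℕ} {F : Type} [Field F] [DecidableEq F] {C : Submodule F (DLIdx ℓ r h → F)}
  {a : Fin ℓ → Fin r → F} (hC : IsDataLocalMRC ℓ r h C a)
include hC

lemma eq_zero_of_data_eq_zero {c : DLIdx ℓ r h → F} (hc : c ∈ C)
    (h0 : ∀ p, c (Sum.inl p) = 0) : c = 0 :=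
  (hC.systematic 0).unique ⟨hc, h0⟩ ⟨C.zero_mem, fun _ => rfl⟩

lemma finrank_eq : Module.finrank F C = ℓ * r := by
  let data : C →ₗ[F] (Fin ℓ × Fin r → F) := (LinearMap.funLeft F F Sum.inl).domRestrict C
  have hdata : Function.Bijective data := by
    refine ⟨(injective_iff_map_eq_zero data).mpr fun c hc => ?_, fun x => ?_⟩
    · exact Subtype.ext (hC.eq_zero_of_data_eq_zero c.2 (congrFun hc))
    · obtain ⟨c, ⟨hc, hx⟩, -⟩ := hC.systematic x
      exact ⟨⟨c, hc⟩, funext hx⟩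
  rw [(LinearEquiv.ofBijective data hdata).finrank_eq, Module.finrank_fintype_fun_eq_card,
    Fintype.card_prod, Fintype.card_fin, Fintype.card_fin]

lemma apply_data_eq_zero {c : DLIdx ℓ r h → F} (hc : c ∈ C) {i : Fin ℓ} {j : Fin r}
    (h0 : ∀ x ∈ (dlGroup ℓ r h i).erase (Sum.inl (i, j)), c x = 0) :
    c (Sum.inl (i, j)) = 0 := by
  have hsum := hC.local_parity c hc i
  rw [h0 _ (by simp [mem_dlGroup]), sum_eq_single j (fun j' _ hj' => by
    rw [h0 _ (by simp [mem_dlGroup, hj']), mul_zero]) (by simp)] at hsum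
  exact (mul_eq_zero.mp hsum.symm).resolve_left (hC.coeff_ne_zero i j)

lemma eq_zero_of_forall_mem_eq_zero {E : Finset (DLIdx ℓ r h)}
    (hE : ∀ i, #(E ∩ dlGroup ℓ r h i) = r) {c : DLIdx ℓ r h → F} (hc : c ∈ C)
    (h0 : ∀ x ∈ E, c x = 0) : c = 0 := by
  refine hC.eq_zero_of_data_eq_zero hc fun ⟨i, j⟩ => ?_
  by_cases hx : Sum.inl (i, j) ∈ E
  · exact h0 _ hx
  have hEi : E ∩ dlGroup ℓ r h i = (dlGroup ℓ r h i).erase (Sum.inl (i, j)) := by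
    refine eq_of_subset_of_card_le (fun y hy => ?_) ?_
    · exact mem_erase.mpr ⟨fun hyx => hx (hyx ▸ (mem_inter.mp hy).1), (mem_inter.mp hy).2⟩
    · rw [card_erase_of_mem (by simp [mem_dlGroup]), card_dlGroup, hE i, Nat.add_sub_cancel]
  exact hC.apply_data_eq_zero hc fun y hy => h0 y (mem_inter.mp (hEi ▸ hy)).1

lemma eq_zero_of_forall_mem_eq_zero_of_subset {E T : Finset (DLIdx ℓ r h)}
    (hE : #E = ℓ * r + h) (hEi : ∀ i, #(E ∩ dlGroup ℓ r h i) = r) (hTE : T ⊆ E)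
    (hT : #T = ℓ * r) {c : DLIdx ℓ r h → F} (hc : c ∈ C) (h0 : ∀ x ∈ T, c x = 0) : c = 0 := by
  set y := LinearMap.funLeft F F (Subtype.val : E → DLIdx ℓ r h) c
  have hy : hammingNorm y ≤ h :=
    calc hammingNorm y ≤ #(E \ T) :=
          card_le_card_of_injOn Subtype.val (fun e he => mem_sdiff.mpr
            ⟨e.2, fun heT => (mem_filter.mp he).2 (h0 e heT)⟩) Subtype.val_injective.injOn
      _ = h := by rw [card_sdiff_of_subset hTE, hE, hT, Nat.add_sub_cancel_left]
  have hy0 : y = 0 := by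
    by_contra hne
    have := hC.le_hammingNorm E hE hEi y ⟨c, hc, rfl⟩ hne
    omega
  exact hC.eq_zero_of_forall_mem_eq_zero hEi hc fun x hx => congrFun hy0 ⟨x, hx⟩

lemma dlRho_eq_card {U : Finset (DLIdx ℓ r h)} (hU : #U ≤ ℓ * r)
    (hno : ∀ i, ¬ dlGroup ℓ r h i ⊆ U) : dlRho ℓ r h F C U = #U := by
  obtain ⟨E, hUE, hE, hEi⟩ := exists_superset_card_inter_dlGroup_eq hno
  obtain ⟨T, hUT, hTE, hT⟩ := exists_subsuperset_card_eq hUE hU (by omega)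
  refine dlRho_eq_card_of_subset hUT ?_
  let proj := (LinearMap.funLeft F F (Subtype.val : T → DLIdx ℓ r h)).domRestrict C
  have hproj : Function.Injective proj := (injective_iff_map_eq_zero proj).mpr fun c hc =>
    Subtype.ext (hC.eq_zero_of_forall_mem_eq_zero_of_subset hE hEi hTE hT c.2
      fun x hx => congrFun hc ⟨x, hx⟩)
  rw [dlRho, ← LinearMap.range_domRestrict, LinearMap.finrank_range_of_inj hproj,
    hC.finrank_eq, hT]

lemma dlRho_lt_card {U : Finset (DLIdx ℓ r h)} {i : Fin ℓ} (hSU : dlGroup ℓ r h i ⊆ U) :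
    dlRho ℓ r h F C U < #U := by
  have hp : Sum.inr (Sum.inl i) ∈ U := hSU (by simp [mem_dlGroup])
  refine (Submodule.finrank_lt fun htop => ?_).trans_eq (by simp)
  obtain ⟨c, hc, hcy⟩ := (Submodule.eq_top_iff'.mp htop) (Pi.single ⟨_, hp⟩ 1)
  have h1 := congrFun hcy ⟨_, hp⟩
  have h0 : ∀ j, c (Sum.inl (i, j)) = 0 := fun j => by
    simpa [Subtype.ext_iff] using congrFun hcy ⟨Sum.inl (i, j), hSU (by simp [mem_dlGroup])⟩
  simp [hC.local_parity c hc i, h0] at h1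

lemma dlRho_eq_card_sub_one {U : Finset (DLIdx ℓ r h)} (hU : #U ≤ ℓ * r + 1) {i : Fin ℓ}
    (hSU : dlGroup ℓ r h i ⊆ U) (hone : ∀ i', dlGroup ℓ r h i' ⊆ U → i' = i) :
    dlRho ℓ r h F C U = #U - 1 := by
  have hp : Sum.inr (Sum.inl i) ∈ U := hSU (by simp [mem_dlGroup])
  have hno : ∀ i', ¬ dlGroup ℓ r h i' ⊆ U.erase (Sum.inr (Sum.inl i)) := fun i' hsub => by
    obtain rfl := hone i' (hsub.trans (erase_subset _ _))
    exact notMem_erase _ U (hsub (by simp [mem_dlGroup]))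
  have hle := dlRho_mono (C := C) (erase_subset (Sum.inr (Sum.inl i)) U)
  rw [hC.dlRho_eq_card (by rw [card_erase_of_mem hp]; omega) hno, card_erase_of_mem hp] at hle
  have := hC.dlRho_lt_card hSU
  omega

lemma dlRho_eq_ite {U : Finset (DLIdx ℓ r h)} (hU : #U ≤ ℓ * r) (hU₂ : #U ≤ 2 * r + 1) :
    dlRho ℓ r h F C U = if ∃ i, dlGroup ℓ r h i ⊆ U then #U - 1 else #U := by
  split_ifs with hS
  · obtain ⟨i, hi⟩ := hS
    exact hC.dlRho_eq_card_sub_one (by omega) hi fun i' hi' => eq_of_dlGroup_subset hU₂ hi' hi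
  · exact hC.dlRho_eq_card hU (not_exists.mp hS)

lemma natCard_dlRho_eq_card_sub_one {u : ℕ} (hu : 1 ≤ u) (huℓ : u ≤ ℓ * r)
    (hu₂ : u ≤ 2 * r + 1) :
    Nat.card {U : Finset (DLIdx ℓ r h) // #U = u ∧ dlRho ℓ r h F C U = u - 1} =
      #((powersetCard u univ).filter fun U => ∃ i, dlGroup ℓ r h i ⊆ U) := by
  rw [← natCard_subtype_card_eq_and]
  refine Nat.card_congr (Equiv.subtypeEquivRight fun U => and_congr_right fun hU => ?_)
  rw [hC.dlRho_eq_ite (by omega) (by omega)]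
  split_ifs <;> simp_all
  omega

lemma natCard_dlRho_eq_card {u : ℕ} (hu : 1 ≤ u) (huℓ : u ≤ ℓ * r) (hu₂ : u ≤ 2 * r + 1) :
    Nat.card {U : Finset (DLIdx ℓ r h) // #U = u ∧ dlRho ℓ r h F C U = u} =
      (ℓ * (r + 1) + h).choose u -
        #((powersetCard u univ).filter fun U => ∃ i, dlGroup ℓ r h i ⊆ U) := by
  rw [← card_DLIdx, ← card_univ, ← card_powersetCard,
    ← card_filter_add_card_filter_not fun U => ∃ i, dlGroup ℓ r h i ⊆ U,
    Nat.add_sub_cancel_left, ← natCard_subtype_card_eq_and]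
  refine Nat.card_congr (Equiv.subtypeEquivRight fun U => and_congr_right fun hU => ?_)
  rw [hC.dlRho_eq_ite (by omega) (by omega)]
  split_ifs <;> simp_all
  omega

end IsDataLocalMRC

theorem stmt_5_general (r h n : ℕ) (hn : n = 2 * r + 2 + h)
    (F : Type) [Field F] [DecidableEq F]
    (C : Submodule F (DLIdx 2 r h → F))
    (hsys : ∀ x : Fin 2 × Fin r → F, ∃! c : DLIdx 2 r h → F,
      c ∈ C ∧ ∀ p, c (Sum.inl p) = x p)
    (a : Fin 2 → Fin r → F) (ha : ∀ i j, a i j ≠ 0)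
    (hloc : ∀ c ∈ C, ∀ i : Fin 2,
      c (Sum.inr (Sum.inl i)) = ∑ j : Fin r, a i j * c (Sum.inl (i, j)))
    (hmrc : ∀ E : Finset (DLIdx 2 r h), E.card = 2 * r + h →
      (∀ i : Fin 2, (E ∩ dlGroup 2 r h i).card = r) →
      Module.finrank F
          (C.map (LinearMap.funLeft F F (Subtype.val : ↥E → DLIdx 2 r h))) = 2 * r ∧
      ∀ y ∈ C.map (LinearMap.funLeft F F (Subtype.val : ↥E → DLIdx 2 r h)),
        y ≠ 0 → h + 1 ≤ hammingNorm y) :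
    -- (i)
    (∀ U : Finset (DLIdx 2 r h), U.card ≤ r → dlRho 2 r h F C U = U.card) ∧
    -- (ii)
    (∀ U : Finset (DLIdx 2 r h), r + 1 ≤ U.card → U.card ≤ 2 * r →
      ((dlGroup 2 r h 0 ⊆ U ∨ dlGroup 2 r h 1 ⊆ U) → dlRho 2 r h F C U = U.card - 1) ∧
      (¬(dlGroup 2 r h 0 ⊆ U ∨ dlGroup 2 r h 1 ⊆ U) → dlRho 2 r h F C U = U.card)) ∧
    -- (iii)
    (∀ u : ℕ, r + 1 ≤ u → u ≤ 2 * r →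
      Nat.card {U : Finset (DLIdx 2 r h) // U.card = u ∧ dlRho 2 r h F C U = u - 1} =
        2 * Nat.choose (n - r - 1) (u - r - 1) ∧
      Nat.card {U : Finset (DLIdx 2 r h) // U.card = u ∧ dlRho 2 r h F C U = u} =
        Nat.choose n u - 2 * Nat.choose (n - r - 1) (u - r - 1)) := by
  have hC : IsDataLocalMRC 2 r h C a := ⟨hsys, ha, hloc, fun E hE hEi => (hmrc E hE hEi).2⟩
  have hρ : ∀ U : Finset (DLIdx 2 r h), #U ≤ 2 * r → dlRho 2 r h F C U =
      if dlGroup 2 r h 0 ⊆ U ∨ dlGroup 2 r h 1 ⊆ U then #U - 1 else #U := fun U hU => by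
    simp only [hC.dlRho_eq_ite hU (by omega), Fin.exists_fin_two]
  refine ⟨fun U hU => ?_, fun U _ hU => ?_, fun u hu₁ hu₂ => ?_⟩
  · have hS (i : Fin 2) : ¬ dlGroup 2 r h i ⊆ U := fun hi => by
      have := card_le_card hi
      rw [card_dlGroup] at this
      omega
    rw [hρ U (by omega), if_neg (by simp [hS])]
  · rw [hρ U hU]
    exact ⟨fun hS => if_pos hS, fun hS => if_neg hS⟩
  · subst hn
    rw [hC.natCard_dlRho_eq_card_sub_one (by omega) (by omega) (by omega),
      hC.natCard_dlRho_eq_card (by omega) (by omega) (by omega),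
      card_filter_exists_dlGroup_subset hu₁ hu₂]
    exact ⟨rfl, by ring_nf⟩

/-- rank structure of a `(k,r,h)` data-local MRC with two local groups
(`k = 2r`, `n = 2r + 2 + h`):
(i) every `U` with `|U| ≤ r` has `ρ(U) = |U|`;
(ii) for `r+1 ≤ |U| ≤ 2r`, `ρ(U) = |U| - 1` if `S₁ ⊆ U` or `S₂ ⊆ U`, else `ρ(U) = |U|`;
(iii) for `r+1 ≤ u ≤ 2r`, `#{U : |U| = u, ρ(U) = u-1} = 2·C(n-r-1, u-r-1)` and
`#{U : |U| = u, ρ(U) = u} = C(n,u) - 2·C(n-r-1, u-r-1)`. -/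
theorem stmt_5 (r h n : ℕ) (hr : 0 < r) (hn : n = 2 * r + 2 + h)
    (F : Type) [Field F] [Fintype F] [DecidableEq F]
    (C : Submodule F (DLIdx 2 r h → F))
    (hsys : ∀ x : Fin 2 × Fin r → F, ∃! c : DLIdx 2 r h → F,
      c ∈ C ∧ ∀ p, c (Sum.inl p) = x p)
    (a : Fin 2 → Fin r → F) (ha : ∀ i j, a i j ≠ 0)
    (hloc : ∀ c ∈ C, ∀ i : Fin 2,
      c (Sum.inr (Sum.inl i)) = ∑ j : Fin r, a i j * c (Sum.inl (i, j)))
    (hmrc : ∀ E : Finset (DLIdx 2 r h), E.card = 2 * r + h →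
      (∀ i : Fin 2, (E ∩ dlGroup 2 r h i).card = r) →
      Module.finrank F
          (C.map (LinearMap.funLeft F F (Subtype.val : ↥E → DLIdx 2 r h))) = 2 * r ∧
      ∀ y ∈ C.map (LinearMap.funLeft F F (Subtype.val : ↥E → DLIdx 2 r h)),
        y ≠ 0 → h + 1 ≤ hammingNorm y) :
    -- (i)
    (∀ U : Finset (DLIdx 2 r h), U.card ≤ r → dlRho 2 r h F C U = U.card) ∧
    -- (ii)
    (∀ U : Finset (DLIdx 2 r h), r + 1 ≤ U.card → U.card ≤ 2 * r →
      ((dlGroup 2 r h 0 ⊆ U ∨ dlGroup 2 r h 1 ⊆ U) → dlRho 2 r h F C U = U.card - 1) ∧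
      (¬(dlGroup 2 r h 0 ⊆ U ∨ dlGroup 2 r h 1 ⊆ U) → dlRho 2 r h F C U = U.card)) ∧
    -- (iii)
    (∀ u : ℕ, r + 1 ≤ u → u ≤ 2 * r →
      Nat.card {U : Finset (DLIdx 2 r h) // U.card = u ∧ dlRho 2 r h F C U = u - 1} =
        2 * Nat.choose (n - r - 1) (u - r - 1) ∧
      Nat.card {U : Finset (DLIdx 2 r h) // U.card = u ∧ dlRho 2 r h F C U = u} =
        Nat.choose n u - 2 * Nat.choose (n - r - 1) (u - r - 1)) :=
  stmt_5_general r h n hn F C hsys a ha hloc hmrc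
end

section
/- Let C be a (k,r,h) local maximally recoverable code with exactly two local groups (so k + h = 2r, r+1 ≤ k < 2r, and n = 2r + 2). Then the generalized Hamming weights of C are d_s = h + 1 + s for 1 ≤ s ≤ r - h, and d_s = h + 2 + s for r - h + 1 ≤ s ≤ 2r - h. -/
/-!
Delete one coordinate `x₁` of the first local group and one coordinate `x₂` of the second. By
local recovery no nonzero codeword vanishes on the remaining `k + h` coordinates, and by maximal
recoverability it has more than `h` nonzero entries there. Wei's monotonicity for this punctured
MDS code gives `|supp D \ {x₁, x₂}| ≥ h + dim D` for every nonzero subcode `D`. Taking `x₁` in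
`supp D` yields `d_s ≥ h + 1 + s`; once `|supp D| ≥ r + 2` the support meets both groups, and
taking both points in it yields `d_s ≥ h + 2 + s`. Both bounds are attained by shortening `C` on
`k - s` coordinates; for `s ≤ r - h` these are taken to include all data coordinates of the
second group, which forces its local parity to vanish as well.
-/

open Finset

abbrev LIdx (k h ℓ : ℕ) : Type := Fin (k + h) ⊕ Fin ℓ

def lGroup (k h r ℓ : ℕ) (i : Fin ℓ) : Finset (LIdx k h ℓ) :=
  insert (Sum.inr i)
    ((Finset.univ.filter fun t : Fin (k + h) =>
      (i : ℕ) * r ≤ (t : ℕ) ∧ (t : ℕ) < ((i : ℕ) + 1) * r).image Sum.inl)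

def lCoord (k h r ℓ : ℕ) (hkh : k + h = ℓ * r) (i : Fin ℓ) (j : Fin r) : Fin (k + h) :=
  ⟨(i : ℕ) * r + (j : ℕ), by
    have hi : (i : ℕ) + 1 ≤ ℓ := i.2
    have hj : (j : ℕ) < r := j.2
    have h1 : ((i : ℕ) + 1) * r ≤ ℓ * r := Nat.mul_le_mul_right r hi
    have h2 : ((i : ℕ) + 1) * r = (i : ℕ) * r + r := by ring
    omega⟩

section CodeSupport

variable {ι F : Type*} [Field F]

open scoped Classical in
noncomputable def codeSupport [Fintype ι] (D : Submodule F (ι → F)) : Finset ι :=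
  {j | ∃ c ∈ D, c j ≠ 0}

@[simp]
theorem mem_codeSupport [Fintype ι] {D : Submodule F (ι → F)} {j : ι} :
    j ∈ codeSupport D ↔ ∃ c ∈ D, c j ≠ 0 := by
  classical
  simp [codeSupport]

theorem ncard_setOf_eq_card_codeSupport [Fintype ι] (D : Submodule F (ι → F)) :
    Set.ncard {j | ∃ c ∈ D, c j ≠ 0} = #(codeSupport D) := by
  rw [← Set.ncard_coe_finset]
  congr 1
  ext j
  simp

theorem codeSupport_subset_of_forall [Fintype ι] {D : Submodule F (ι → F)} {W : Finset ι}
    (hW : ∀ c ∈ D, ∀ j ∉ W, c j = 0) : codeSupport D ⊆ W := by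
  intro j hj
  obtain ⟨c, hc, hcj⟩ := mem_codeSupport.1 hj
  by_contra hjW
  exact hcj (hW c hc j hjW)

theorem finrank_le_card_of_eq_zero {D : Submodule F (ι → F)} {A : Finset ι}
    (hA : ∀ c ∈ D, (∀ j ∈ A, c j = 0) → c = 0) : Module.finrank F D ≤ #A := by
  let ρ : D →ₗ[F] (A → F) := (LinearMap.funLeft F F ((↑) : A → ι)).comp D.subtype
  have hρ : Function.Injective ρ := by
    rw [← LinearMap.ker_eq_bot, LinearMap.ker_eq_bot']
    intro c hc
    exact Subtype.ext (hA c c.2 fun j hj => congrFun hc ⟨j, hj⟩)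
  simpa using LinearMap.finrank_le_finrank_of_injective hρ

-- Wei's monotonicity `d_s ≥ d_1 + s - 1` for the restriction of `D` to `E`.
theorem finrank_add_le_card_inter_codeSupport [Fintype ι] [DecidableEq ι] [DecidableEq F]
    {D : Submodule F (ι → F)} {E : Finset ι} {h : ℕ}
    (hE : ∀ c ∈ D, c ≠ 0 → h < #{j ∈ E | c j ≠ 0}) (hD : 0 < Module.finrank F D) :
    Module.finrank F D + h ≤ #(E ∩ codeSupport D) := by
  obtain ⟨A, hAsub, hAcard⟩ :=
    exists_subset_card_eq (s := E ∩ codeSupport D) (tsub_le_self (b := h))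
  suffices Module.finrank F D ≤ #A by omega
  refine finrank_le_card_of_eq_zero fun c hc hcA => ?_
  by_contra hc0
  have hsub : {j ∈ E | c j ≠ 0} ⊆ (E ∩ codeSupport D) \ A := by
    intro j hj
    obtain ⟨hjE, hcj⟩ := mem_filter.1 hj
    exact mem_sdiff.2 ⟨mem_inter.2 ⟨hjE, mem_codeSupport.2 ⟨c, hc, hcj⟩⟩,
      fun hjA => hcj (hcA j hjA)⟩
  have := (card_le_card hsub).trans_eq (card_sdiff_of_subset hAsub)
  have := hE c hc hc0
  omega

theorem hammingNorm_funLeft_subtype [DecidableEq F] (E : Finset ι) (c : ι → F) :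
    hammingNorm (LinearMap.funLeft F F (Subtype.val : E → ι) c) = #{j ∈ E | c j ≠ 0} :=
  (congrArg card (filter_attach (fun j => c j ≠ 0) E)).trans (by rw [card_map, card_attach])

def shortening (C : Submodule F (ι → F)) (Z : Finset ι) : Submodule F (ι → F) :=
  C ⊓ LinearMap.ker (LinearMap.funLeft F F ((↑) : Z → ι))

theorem shortening_le (C : Submodule F (ι → F)) (Z : Finset ι) : shortening C Z ≤ C :=
  inf_le_left

theorem mem_shortening {C : Submodule F (ι → F)} {Z : Finset ι} {c : ι → F} :
    c ∈ shortening C Z ↔ c ∈ C ∧ ∀ j ∈ Z, c j = 0 := by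
  simp [shortening, funext_iff]

theorem finrank_le_finrank_shortening_add_card [Fintype ι] (C : Submodule F (ι → F))
    (Z : Finset ι) :
    Module.finrank F C ≤ Module.finrank F (shortening C Z) + #Z := by
  let ρ := LinearMap.funLeft F F ((↑) : Z → ι)
  have h1 : Module.finrank F ↥(C ⊔ LinearMap.ker ρ) + Module.finrank F (shortening C Z) = _ :=
    Submodule.finrank_sup_add_finrank_inf_eq C (LinearMap.ker ρ)
  have h2 := LinearMap.finrank_range_add_finrank_ker ρ
  have h3 := Submodule.finrank_le (C ⊔ LinearMap.ker ρ)
  have h4 := Submodule.finrank_le (LinearMap.range ρ)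
  simp only [Module.finrank_pi, Fintype.card_coe] at h2 h3 h4
  omega

theorem codeSupport_shortening_subset_compl [Fintype ι] [DecidableEq ι]
    (C : Submodule F (ι → F)) (Z : Finset ι) : codeSupport (shortening C Z) ⊆ Zᶜ :=
  codeSupport_subset_of_forall fun _ hc j hj => (mem_shortening.1 hc).2 j (by simpa using hj)

theorem isLeast_card_codeSupport [Fintype ι] {C : Submodule F (ι → F)} {s w : ℕ}
    (hlow : ∀ D ≤ C, Module.finrank F D = s → w ≤ #(codeSupport D))
    (hw : ∃ D ≤ C, Module.finrank F D = s ∧ #(codeSupport D) = w) :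
    IsLeast {w | ∃ D : Submodule F (ι → F), D ≤ C ∧ Module.finrank F D = s ∧
      Set.ncard {j | ∃ c ∈ D, c j ≠ 0} = w} w := by
  obtain ⟨D, hDC, hDs, hDw⟩ := hw
  refine ⟨⟨D, hDC, hDs, by rw [ncard_setOf_eq_card_codeSupport, hDw]⟩, ?_⟩
  rintro _ ⟨D', hD'C, hD's, rfl⟩
  rw [ncard_setOf_eq_card_codeSupport]
  exact hlow D' hD'C hD's

theorem finrank_eq_card_of_existsUnique {κ : Type*} [Fintype κ] {C : Submodule F (ι → F)}
    (g : κ → ι) (hC : ∀ x : κ → F, ∃! c : ι → F, c ∈ C ∧ ∀ j, c (g j) = x j) :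
    Module.finrank F C = Fintype.card κ := by
  let ρ : C →ₗ[F] (κ → F) := (LinearMap.funLeft F F g).comp C.subtype
  have hρ : Function.Bijective ρ := by
    refine ⟨fun c₁ c₂ h12 => ?_, fun x => ?_⟩
    · obtain ⟨u, -, hu⟩ := hC (ρ c₁)
      exact Subtype.ext ((hu _ ⟨c₁.2, fun _ => rfl⟩).trans
        (hu _ ⟨c₂.2, fun j => (congrFun h12 j).symm⟩).symm)
    · obtain ⟨c, ⟨hcC, hcx⟩, -⟩ := hC x
      exact ⟨⟨c, hcC⟩, funext hcx⟩
  simpa using (LinearEquiv.ofBijective ρ hρ).finrank_eq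

end CodeSupport

section LocalGroups

variable {k h r ℓ : ℕ}

theorem lCoord_injective (hkh : k + h = ℓ * r) (i : Fin ℓ) :
    Function.Injective (lCoord k h r ℓ hkh i) := by
  intro j j' hjj'
  have := congrArg Fin.val hjj'
  simp only [lCoord] at this
  exact Fin.ext (by omega)

@[simp]
theorem inl_mem_lGroup_iff {i : Fin ℓ} {t : Fin (k + h)} :
    Sum.inl t ∈ lGroup k h r ℓ i ↔ i * r ≤ (t : ℕ) ∧ (t : ℕ) < (i + 1) * r := by
  simp [lGroup]

@[simp]
theorem inr_mem_lGroup_iff {i i' : Fin ℓ} : Sum.inr i' ∈ lGroup k h r ℓ i ↔ i' = i := by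
  simp [lGroup]

theorem card_lIdx : Fintype.card (LIdx k h ℓ) = k + h + ℓ := by
  simp

theorem mem_lGroup_iff (hkh : k + h = ℓ * r) {i : Fin ℓ} {x : LIdx k h ℓ} :
    x ∈ lGroup k h r ℓ i ↔ x = Sum.inr i ∨ ∃ j, x = Sum.inl (lCoord k h r ℓ hkh i j) := by
  simp only [lGroup, mem_insert, mem_image, mem_filter, mem_univ, true_and]
  refine or_congr Iff.rfl ⟨?_, ?_⟩
  · rintro ⟨t, ⟨ht₁, ht₂⟩, rfl⟩
    refine ⟨⟨t - i * r, by rw [add_mul] at ht₂; omega⟩, congrArg Sum.inl (Fin.ext ?_)⟩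
    simp only [lCoord]
    omega
  · rintro ⟨j, rfl⟩
    refine ⟨_, ⟨?_, ?_⟩, rfl⟩ <;> simp only [lCoord, add_mul] <;> omega

theorem card_lGroup (hkh : k + h = ℓ * r) (i : Fin ℓ) : #(lGroup k h r ℓ i) = r + 1 := by
  have hS : lGroup k h r ℓ i =
      insert (Sum.inr i) (univ.image (Sum.inl ∘ lCoord k h r ℓ hkh i)) := by
    ext x
    simp [mem_lGroup_iff hkh, eq_comm]
  rw [hS, card_insert_of_notMem (by simp),
    card_image_of_injective _ (Sum.inl_injective.comp (lCoord_injective hkh i)), card_fin]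

theorem eq_zero_of_forall_lGroup_ne (hkh : k + h = ℓ * r) {F : Type*} [Field F]
    {a : Fin r → F} (ha : ∀ j, a j ≠ 0) {c : LIdx k h ℓ → F} {i : Fin ℓ}
    (hc : c (Sum.inr i) = ∑ j, a j * c (Sum.inl (lCoord k h r ℓ hkh i j)))
    {x : LIdx k h ℓ} (hx : x ∈ lGroup k h r ℓ i)
    (hzero : ∀ y ∈ lGroup k h r ℓ i, y ≠ x → c y = 0) : c x = 0 := by
  have hmem : ∀ j, Sum.inl (lCoord k h r ℓ hkh i j) ∈ lGroup k h r ℓ i :=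
    fun j => (mem_lGroup_iff hkh).2 (Or.inr ⟨j, rfl⟩)
  rcases (mem_lGroup_iff hkh).1 hx with rfl | ⟨j₀, rfl⟩
  · rw [hc]
    exact sum_eq_zero fun j _ => by rw [hzero _ (hmem j) Sum.inl_ne_inr, mul_zero]
  · have hsum : c (Sum.inr i) = a j₀ * c (Sum.inl (lCoord k h r ℓ hkh i j₀)) := by
      rw [hc]
      refine sum_eq_single j₀ (fun j _ hj => ?_) (by simp)
      rw [hzero _ (hmem j) fun he => hj (lCoord_injective hkh i (Sum.inl_injective he)),
        mul_zero]
    rw [hzero _ ((mem_lGroup_iff hkh).2 (Or.inl rfl)) Sum.inr_ne_inl] at hsum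
    exact (mul_eq_zero.1 hsum.symm).resolve_left (ha j₀)

theorem mem_lGroup_one_iff (hkh : k + h = 2 * r) {x : LIdx k h 2} :
    x ∈ lGroup k h r 2 1 ↔ x ∉ lGroup k h r 2 0 := by
  rcases x with t | i
  · have := t.2
    simp only [inl_mem_lGroup_iff, Fin.val_zero, Fin.val_one]
    omega
  · fin_cases i <;> simp

end LocalGroups

section TwoGroups

variable {k h r : ℕ} {F : Type*} [Field F]

theorem card_compl_pair_inter_lGroup (hkh : k + h = 2 * r) {x₁ x₂ : LIdx k h 2}
    (h₁ : x₁ ∈ lGroup k h r 2 0) (h₂ : x₂ ∈ lGroup k h r 2 1) (i : Fin 2) :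
    #({x₁, x₂}ᶜ ∩ lGroup k h r 2 i) = r := by
  have key : ∀ {x y : LIdx k h 2} {S : Finset (LIdx k h 2)}, x ∈ S → y ∉ S →
      #({x, y}ᶜ ∩ S) = #S - 1 := fun {x y S} hx hy => by
    rw [← card_erase_of_mem hx]
    congr 1
    ext j
    by_cases hjy : j = y <;> simp_all [and_comm]
  fin_cases i
  · rw [Fin.zero_eta, key h₁ ((mem_lGroup_one_iff hkh).1 h₂), card_lGroup (by omega),
      add_tsub_cancel_right]
  · rw [Fin.mk_one, pair_comm, key h₂ (by rw [mem_lGroup_one_iff hkh, not_not]; exact h₁),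
      card_lGroup (by omega), add_tsub_cancel_right]

theorem eq_zero_of_eq_zero_off_transversal (hkh : k + h = 2 * r) {C : Submodule F (LIdx k h 2 → F)}
    {a : Fin 2 → Fin r → F} (ha : ∀ i j, a i j ≠ 0)
    (hloc : ∀ c ∈ C, ∀ i : Fin 2,
      c (Sum.inr i) = ∑ j : Fin r, a i j * c (Sum.inl (lCoord k h r 2 hkh i j)))
    {x₁ x₂ : LIdx k h 2} (h₁ : x₁ ∈ lGroup k h r 2 0) (h₂ : x₂ ∈ lGroup k h r 2 1)
    {c : LIdx k h 2 → F} (hc : c ∈ C) (hzero : ∀ j, j ≠ x₁ → j ≠ x₂ → c j = 0) : c = 0 := by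
  have hS₀ : ∀ y ∈ lGroup k h r 2 0, y ≠ x₂ := fun y hy hyx =>
    (mem_lGroup_one_iff hkh).1 (hyx ▸ h₂) hy
  have hS₁ : ∀ y ∈ lGroup k h r 2 1, y ≠ x₁ := fun y hy hyx =>
    (mem_lGroup_one_iff hkh).1 hy (hyx ▸ h₁)
  funext j
  by_cases hj₁ : j = x₁
  · subst hj₁
    exact eq_zero_of_forall_lGroup_ne (by omega) (ha 0) (hloc c hc 0) h₁
      fun y hy hyx => hzero y hyx (hS₀ y hy)
  by_cases hj₂ : j = x₂
  · subst hj₂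
    exact eq_zero_of_forall_lGroup_ne (by omega) (ha 1) (hloc c hc 1) h₂
      fun y hy hyx => hzero y (hS₁ y hy) hyx
  exact hzero j hj₁ hj₂

variable [DecidableEq F]

variable (k h r) in
def IsMDSOnTransversals (C : Submodule F (LIdx k h 2 → F)) : Prop :=
  ∀ x₁ ∈ lGroup k h r 2 0, ∀ x₂ ∈ lGroup k h r 2 1, ∀ c ∈ C, c ≠ 0 →
    h < #{j ∈ ({x₁, x₂}ᶜ : Finset (LIdx k h 2)) | c j ≠ 0}

theorem isMDSOnTransversals (hkh : k + h = 2 * r) {C : Submodule F (LIdx k h 2 → F)}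
    {a : Fin 2 → Fin r → F} (ha : ∀ i j, a i j ≠ 0)
    (hloc : ∀ c ∈ C, ∀ i : Fin 2,
      c (Sum.inr i) = ∑ j : Fin r, a i j * c (Sum.inl (lCoord k h r 2 hkh i j)))
    (hmrc : ∀ E : Finset (LIdx k h 2), E.card = k + h →
      (∀ i : Fin 2, (E ∩ lGroup k h r 2 i).card = r) →
      Module.finrank F
          (C.map (LinearMap.funLeft F F (Subtype.val : ↥E → LIdx k h 2))) = k ∧
      ∀ y ∈ C.map (LinearMap.funLeft F F (Subtype.val : ↥E → LIdx k h 2)),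
        y ≠ 0 → h + 1 ≤ hammingNorm y) :
    IsMDSOnTransversals k h r C := by
  intro x₁ h₁ x₂ h₂ c hc hc0
  have hne : x₁ ≠ x₂ := fun he => (mem_lGroup_one_iff hkh).1 h₂ (he ▸ h₁)
  have hcard : #({x₁, x₂}ᶜ : Finset (LIdx k h 2)) = k + h := by
    rw [card_compl, card_pair hne, card_lIdx, add_tsub_cancel_right]
  let ρ := LinearMap.funLeft F F (Subtype.val : ↥({x₁, x₂}ᶜ : Finset (LIdx k h 2)) → LIdx k h 2)
  have hρc : ρ c ≠ 0 := fun hρc0 => hc0 <|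
    eq_zero_of_eq_zero_off_transversal hkh ha hloc h₁ h₂ hc
      fun j hj₁ hj₂ => congrFun hρc0 ⟨j, by simp [hj₁, hj₂]⟩
  have := (hmrc _ hcard (card_compl_pair_inter_lGroup hkh h₁ h₂)).2 (ρ c) ⟨c, hc, rfl⟩ hρc
  rw [hammingNorm_funLeft_subtype] at this
  omega

namespace IsMDSOnTransversals

variable {C D : Submodule F (LIdx k h 2 → F)}

theorem finrank_add_le_card_sdiff_pair (hT : IsMDSOnTransversals k h r C) (hDC : D ≤ C)
    (hD : 0 < Module.finrank F D) {x₁ x₂ : LIdx k h 2}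
    (h₁ : x₁ ∈ lGroup k h r 2 0) (h₂ : x₂ ∈ lGroup k h r 2 1) :
    Module.finrank F D + h ≤ #(codeSupport D \ {x₁, x₂}) := by
  rw [sdiff_eq_inter_compl, inter_comm]
  exact finrank_add_le_card_inter_codeSupport (fun c hc => hT x₁ h₁ x₂ h₂ c (hDC hc)) hD

theorem finrank_add_succ_le_card_codeSupport (hkh : k + h = 2 * r)
    (hT : IsMDSOnTransversals k h r C) (hDC : D ≤ C) (hD : 0 < Module.finrank F D) :
    Module.finrank F D + h + 1 ≤ #(codeSupport D) := by
  obtain ⟨c, hc, hc0⟩ := Submodule.exists_mem_ne_zero_of_ne_bot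
    (Submodule.one_le_finrank_iff.1 hD)
  obtain ⟨x, hx⟩ := Function.ne_iff.1 hc0
  have hxW : x ∈ codeSupport D := mem_codeSupport.2 ⟨c, hc, hx⟩
  have hsub : ∀ y, codeSupport D \ {x, y} ⊆ (codeSupport D).erase x := fun y j => by
    simp +contextual
  have hle : ∀ y, #(codeSupport D \ {x, y}) + 1 ≤ #(codeSupport D) := fun y =>
    (Nat.add_le_add_right (card_le_card (hsub y)) 1).trans_eq (card_erase_add_one hxW)
  by_cases hx₀ : x ∈ lGroup k h r 2 0
  · have := hT.finrank_add_le_card_sdiff_pair hDC hD hx₀ (x₂ := Sum.inr 1)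
      (by simp)
    have := hle (Sum.inr 1)
    omega
  · have := hT.finrank_add_le_card_sdiff_pair hDC hD (x₁ := Sum.inr 0) (by simp)
      ((mem_lGroup_one_iff hkh).2 hx₀)
    have := hle (Sum.inr 0)
    rw [pair_comm] at this
    omega

theorem finrank_add_two_le_card_codeSupport (hkh : k + h = 2 * r)
    (hT : IsMDSOnTransversals k h r C) (hDC : D ≤ C) (hD : r - h < Module.finrank F D) :
    Module.finrank F D + h + 2 ≤ #(codeSupport D) := by
  have hW := hT.finrank_add_succ_le_card_codeSupport hkh hDC (by omega)
  obtain ⟨x₁, hx₁W, hx₁⟩ := exists_mem_notMem_of_card_lt_card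
    (s := lGroup k h r 2 1) (t := codeSupport D) (by rw [card_lGroup (by omega)]; omega)
  obtain ⟨x₂, hx₂W, hx₂⟩ := exists_mem_notMem_of_card_lt_card
    (s := lGroup k h r 2 0) (t := codeSupport D) (by rw [card_lGroup (by omega)]; omega)
  rw [mem_lGroup_one_iff hkh, not_not] at hx₁
  rw [← mem_lGroup_one_iff hkh] at hx₂
  have hne : x₁ ≠ x₂ := fun he => (mem_lGroup_one_iff hkh).1 hx₂ (he ▸ hx₁)
  have := hT.finrank_add_le_card_sdiff_pair hDC (by omega) hx₁ hx₂
  rw [card_sdiff_of_subset (insert_subset hx₁W (singleton_subset_iff.2 hx₂W)),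
    card_pair hne] at this
  omega

theorem exists_finrank_eq_card_codeSupport_eq_succ (hkh : k + h = 2 * r)
    (hT : IsMDSOnTransversals k h r C) (hC : Module.finrank F C = k)
    {a : Fin 2 → Fin r → F} (ha : ∀ i j, a i j ≠ 0)
    (hloc : ∀ c ∈ C, ∀ i : Fin 2,
      c (Sum.inr i) = ∑ j : Fin r, a i j * c (Sum.inl (lCoord k h r 2 hkh i j)))
    {s : ℕ} (hs₁ : 1 ≤ s) (hs₂ : s ≤ r - h) :
    ∃ D ≤ C, Module.finrank F D = s ∧ #(codeSupport D) = h + 1 + s := by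
  have hinr : Sum.inr 1 ∈ lGroup k h r 2 1 := by simp
  obtain ⟨Z, hSZ, hZ, hZcard⟩ := exists_subsuperset_card_eq (n := k - s)
    (erase_subset_erase (Sum.inr 1) (subset_univ (lGroup k h r 2 1)))
    (by rw [card_erase_of_mem hinr, card_lGroup (by omega)]; omega)
    (by rw [card_erase_of_mem (mem_univ _), card_univ, card_lIdx]; omega)
  have hsupp : codeSupport (shortening C Z) ⊆ (insert (Sum.inr 1) Z)ᶜ := by
    refine codeSupport_subset_of_forall fun c hc j hj => ?_
    rw [mem_shortening] at hc
    rw [mem_compl, not_not, mem_insert] at hj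
    obtain rfl | hjZ := hj
    · exact eq_zero_of_forall_lGroup_ne (by omega) (ha 1) (hloc c hc.1 1) hinr
        fun y hy hy1 => hc.2 y (hSZ (mem_erase.2 ⟨hy1, hy⟩))
    · exact hc.2 j hjZ
  have hcard : #(insert (Sum.inr 1) Z)ᶜ = h + 1 + s := by
    rw [card_compl, card_insert_of_notMem fun h1 => by simpa using hZ h1, hZcard, card_lIdx]
    omega
  have hdim := finrank_le_finrank_shortening_add_card C Z
  have hlow := hT.finrank_add_succ_le_card_codeSupport hkh (shortening_le C Z)
    (by omega)
  have := card_le_card hsupp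
  exact ⟨_, shortening_le C Z, by omega, by omega⟩

theorem exists_finrank_eq_card_codeSupport_eq_add_two (hkh : k + h = 2 * r)
    (hT : IsMDSOnTransversals k h r C) (hC : Module.finrank F C = k)
    {s : ℕ} (hs₁ : r - h + 1 ≤ s) (hs₂ : s ≤ 2 * r - h) :
    ∃ D ≤ C, Module.finrank F D = s ∧ #(codeSupport D) = h + 2 + s := by
  obtain ⟨Z, -, hZcard⟩ := exists_subset_card_eq (s := (univ : Finset (LIdx k h 2)))
    (n := k - s) (by rw [card_univ, card_lIdx]; omega)
  have hcard : #Zᶜ = h + 2 + s := by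
    rw [card_compl, hZcard, card_lIdx]
    omega
  have hdim := finrank_le_finrank_shortening_add_card C Z
  have hlow := hT.finrank_add_two_le_card_codeSupport hkh (shortening_le C Z)
    (by omega)
  have := card_le_card (codeSupport_shortening_subset_compl C Z)
  exact ⟨_, shortening_le C Z, by omega, by omega⟩

end IsMDSOnTransversals

end TwoGroups

theorem stmt_13_general (k h r : ℕ) (hkh : k + h = 2 * r)
    (F : Type) [Field F] [DecidableEq F]
    (C : Submodule F (LIdx k h 2 → F))
    (hsys : ∀ x : Fin k → F, ∃! c : LIdx k h 2 → F,
      c ∈ C ∧ ∀ j : Fin k, c (Sum.inl (Fin.castLE (Nat.le_add_right k h) j)) = x j)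
    (a : Fin 2 → Fin r → F) (ha : ∀ i j, a i j ≠ 0)
    (hloc : ∀ c ∈ C, ∀ i : Fin 2,
      c (Sum.inr i) = ∑ j : Fin r, a i j * c (Sum.inl (lCoord k h r 2 hkh i j)))
    (hmrc : ∀ E : Finset (LIdx k h 2), E.card = k + h →
      (∀ i : Fin 2, (E ∩ lGroup k h r 2 i).card = r) →
      Module.finrank F
          (C.map (LinearMap.funLeft F F (Subtype.val : ↥E → LIdx k h 2))) = k ∧
      ∀ y ∈ C.map (LinearMap.funLeft F F (Subtype.val : ↥E → LIdx k h 2)),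
        y ≠ 0 → h + 1 ≤ hammingNorm y)
    (d : ℕ → ℕ)
    (hd : ∀ s, 1 ≤ s → s ≤ 2 * r - h →
      IsLeast {w | ∃ D : Submodule F (LIdx k h 2 → F), D ≤ C ∧ Module.finrank F D = s ∧
        Set.ncard {j : LIdx k h 2 | ∃ c ∈ D, c j ≠ 0} = w} (d s)) :
    (∀ s, 1 ≤ s → s ≤ r - h → d s = h + 1 + s) ∧
    (∀ s, r - h + 1 ≤ s → s ≤ 2 * r - h → d s = h + 2 + s) := by
  have hC : Module.finrank F C = k := by simpa using finrank_eq_card_of_existsUnique _ hsys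
  have hT : IsMDSOnTransversals k h r C := isMDSOnTransversals hkh ha hloc hmrc
  refine ⟨fun s hs₁ hs₂ => (hd s hs₁ (by omega)).unique (isLeast_card_codeSupport ?_
      (hT.exists_finrank_eq_card_codeSupport_eq_succ hkh hC ha hloc hs₁ hs₂)),
    fun s hs₁ hs₂ => (hd s (by omega) hs₂).unique (isLeast_card_codeSupport ?_
      (hT.exists_finrank_eq_card_codeSupport_eq_add_two hkh hC hs₁ hs₂))⟩
  · intro D hDC hDs
    have := hT.finrank_add_succ_le_card_codeSupport hkh hDC (by omega)
    omega
  · intro D hDC hDs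
    have := hT.finrank_add_two_le_card_codeSupport hkh hDC (by omega)
    omega

/-- the generalized Hamming weights of a `(k,r,h)` local MRC with two local
groups (`k + h = 2r`, `r + 1 ≤ k < 2r`, `n = 2r + 2`) are `d_s = h + 1 + s` for
`1 ≤ s ≤ r - h` and `d_s = h + 2 + s` for `r - h + 1 ≤ s ≤ 2r - h`. -/
theorem stmt_13 (k h r : ℕ) (hkh : k + h = 2 * r) (hk1 : r + 1 ≤ k) (hk2 : k < 2 * r)
    (F : Type) [Field F] [Fintype F] [DecidableEq F]
    (C : Submodule F (LIdx k h 2 → F))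
    (hsys : ∀ x : Fin k → F, ∃! c : LIdx k h 2 → F,
      c ∈ C ∧ ∀ j : Fin k, c (Sum.inl (Fin.castLE (Nat.le_add_right k h) j)) = x j)
    (a : Fin 2 → Fin r → F) (ha : ∀ i j, a i j ≠ 0)
    (hloc : ∀ c ∈ C, ∀ i : Fin 2,
      c (Sum.inr i) = ∑ j : Fin r, a i j * c (Sum.inl (lCoord k h r 2 hkh i j)))
    (hmrc : ∀ E : Finset (LIdx k h 2), E.card = k + h →
      (∀ i : Fin 2, (E ∩ lGroup k h r 2 i).card = r) →
      Module.finrank F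
          (C.map (LinearMap.funLeft F F (Subtype.val : ↥E → LIdx k h 2))) = k ∧
      ∀ y ∈ C.map (LinearMap.funLeft F F (Subtype.val : ↥E → LIdx k h 2)),
        y ≠ 0 → h + 1 ≤ hammingNorm y)
    (d : ℕ → ℕ)
    (hd : ∀ s, 1 ≤ s → s ≤ 2 * r - h →
      IsLeast {w | ∃ D : Submodule F (LIdx k h 2 → F), D ≤ C ∧ Module.finrank F D = s ∧
        Set.ncard {j : LIdx k h 2 | ∃ c ∈ D, c j ≠ 0} = w} (d s)) :
    (∀ s, 1 ≤ s → s ≤ r - h → d s = h + 1 + s) ∧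
    (∀ s, r - h + 1 ≤ s → s ≤ 2 * r - h → d s = h + 2 + s) :=
  stmt_13_general k h r hkh F C hsys a ha hloc hmrc d hd
end
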